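/- arXiv:1510.08656 — 2 statements merged into one kernel-verified Lean document; each statement's English description precedes it below -/
import Mathlib

section
/- For all x ∈ [0,1], one has 1 − H((1−x)/2) ≤ x²/(2·ln 2) + (1 − 1/(2·ln 2))·x⁴, where H is the binary entropy function. -/
/-!
With `x` the bias, `1 - H((1 - x)/2) = symmLog x / (2 ln 2)`, and for `|x| < 1`
`symmLog x = ∑_{n ≥ 0} x^(2n+2) / ((n + 1)(2n + 1))`.
Hence `(symmLog x - x²) / x⁴` is a power series in `x²` with nonnegative coefficients, so it is
nondecreasing on `[0, 1)` and bounded by its value `symmLog 1 - 1 = 2 ln 2 - 1` at `x = 1`.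
-/

noncomputable def binEnt (x : ℝ) : ℝ := -x * Real.logb 2 x - (1 - x) * Real.logb 2 (1 - x)

open Real Filter Topology

noncomputable def symmLog (x : ℝ) : ℝ := (1 + x) * log (1 + x) + (1 - x) * log (1 - x)

@[fun_prop]
lemma continuous_symmLog : Continuous symmLog :=
  (continuous_mul_log.comp (continuous_const.add continuous_id)).add
    (continuous_mul_log.comp (continuous_const.sub continuous_id))

lemma symmLog_one : symmLog 1 = 2 * log 2 := by
  norm_num [symmLog]

lemma hasSum_symmLog {x : ℝ} (h : |x| < 1) :
    HasSum (fun n : ℕ => x ^ (2 * n + 2) / ((n + 1) * (2 * n + 1))) (symmLog x) := by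
  obtain ⟨hx1, hx2⟩ := abs_lt.mp h
  have hsq : |x ^ 2| < 1 := by
    rwa [abs_pow, sq_lt_one_iff_abs_lt_one, abs_abs]
  have hsum := ((hasSum_log_sub_log_of_abs_lt_one h).mul_left x).sub
    (hasSum_pow_div_log_of_abs_lt_one hsq)
  have hlog : log (1 - x ^ 2) = log (1 + x) + log (1 - x) := by
    rw [← log_mul (by linarith) (by linarith)]; ring_nf
  rw [show symmLog x = x * (log (1 + x) - log (1 - x)) - -log (1 - x ^ 2) by
    rw [symmLog, hlog]; ring]
  refine hsum.congr_fun fun n => ?_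
  rw [← pow_mul]
  field_simp
  ring

lemma pow_four_mul_symmLog_sub_sq_le {x y : ℝ} (hx : 0 ≤ x) (hxy : x ≤ y) (hy : y < 1) :
    y ^ 4 * (symmLog x - x ^ 2) ≤ x ^ 4 * (symmLog y - y ^ 2) := by
  have tail {t : ℝ} (ht : |t| < 1) :
      HasSum (fun n : ℕ => t ^ (2 * n + 4) / ((n + 2) * (2 * n + 3))) (symmLog t - t ^ 2) := by
    have := (hasSum_nat_add_iff' 1).mpr (hasSum_symmLog ht)
    norm_num at this
    refine this.congr_fun fun n => ?_
    ring_nf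
  refine hasSum_le (fun n => ?_) ((tail (abs_lt.mpr ⟨by linarith, by linarith⟩)).mul_left _)
    ((tail (abs_lt.mpr ⟨by linarith, hy⟩)).mul_left _)
  calc y ^ 4 * (x ^ (2 * n + 4) / ((n + 2) * (2 * n + 3)))
      = x ^ 4 * y ^ 4 * x ^ (2 * n) / ((n + 2) * (2 * n + 3)) := by ring
    _ ≤ x ^ 4 * y ^ 4 * y ^ (2 * n) / ((n + 2) * (2 * n + 3)) := by gcongr
    _ = x ^ 4 * (y ^ (2 * n + 4) / ((n + 2) * (2 * n + 3))) := by ring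

lemma symmLog_le {x : ℝ} (h0 : 0 ≤ x) (h1 : x ≤ 1) :
    symmLog x ≤ x ^ 2 + (2 * log 2 - 1) * x ^ 4 := by
  rcases h1.eq_or_lt with rfl | h1
  · rw [symmLog_one]; linarith
  have hlim : ∀ g : ℝ → ℝ, Continuous g → Tendsto g (𝓝[<] 1) (𝓝 (g 1)) := fun g hg =>
    hg.continuousAt.tendsto.mono_left nhdsWithin_le_nhds
  have key : 1 ^ 4 * (symmLog x - x ^ 2) ≤ x ^ 4 * (symmLog 1 - 1 ^ 2) :=
    le_of_tendsto_of_tendsto (hlim (fun y => y ^ 4 * (symmLog x - x ^ 2)) (by fun_prop))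
      (hlim (fun y => x ^ 4 * (symmLog y - y ^ 2)) (by fun_prop))
      (eventually_of_mem (Ioo_mem_nhdsLT h1) fun y hy =>
        pow_four_mul_symmLog_sub_sq_le h0 hy.1.le hy.2)
  rw [symmLog_one] at key
  linarith

lemma mul_log_div {b : ℝ} (a : ℝ) (hb : b ≠ 0) : a * log (a / b) = a * log a - a * log b := by
  rcases eq_or_ne a 0 with rfl | ha
  · simp
  · rw [log_div ha hb, mul_sub]

lemma one_sub_binEnt_eq (x : ℝ) : 1 - binEnt ((1 - x) / 2) = symmLog x / (2 * log 2) := by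
  have hlog : log 2 ≠ 0 := (log_pos one_lt_two).ne'
  rw [binEnt, logb, logb, show 1 - (1 - x) / 2 = (1 + x) / 2 by ring, symmLog]
  field_simp
  rw [mul_log_div _ two_ne_zero, mul_log_div _ two_ne_zero]
  ring

theorem stmt_1 (x : ℝ) (h0 : 0 ≤ x) (h1 : x ≤ 1) :
    1 - binEnt ((1 - x) / 2) ≤ x ^ 2 / (2 * Real.log 2) + (1 - 1 / (2 * Real.log 2)) * x ^ 4 := by
  calc 1 - binEnt ((1 - x) / 2) = symmLog x / (2 * log 2) := one_sub_binEnt_eq x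
    _ ≤ (x ^ 2 + (2 * log 2 - 1) * x ^ 4) / (2 * log 2) := by gcongr; exact symmLog_le h0 h1
    _ = x ^ 2 / (2 * log 2) + (1 - 1 / (2 * log 2)) * x ^ 4 := by field_simp
end

section
/- For 0 ≤ ε ≤ 1/2 and λ = (1−2ε)², one has 1 − H(ε) = (1/ln 2)·Σ_{k=1}^∞ λ^k/(2k(2k−1)), where H is the binary entropy function. -/
open Real Set

/-!
With `x = 1 - 2ε`, so that `λ = x²`, the partial fraction `1/((2k+1)(2k+2)) = 1/(2k+1) - 1/(2k+2)`
splits the series into the Taylor series of `x · artanh x` and of `log (1 - x²) / 2`, which gives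
`log 2 - H(ε)` (entropy in nats) for `0 < ε < 1`. Both sides are continuous on `[0, 1]`, the series
by the Weierstrass M-test against `∑ 1/((2k+1)(2k+2))`, so the identity extends to the endpoints.
-/

noncomputable def entropySeriesTerm (t : ℝ) (k : ℕ) : ℝ :=
  t ^ (k + 1) / ((2 * ((k : ℝ) + 1)) * (2 * ((k : ℝ) + 1) - 1))

lemma hasSum_entropySeriesTerm_sq {x : ℝ} (hx : |x| < 1) :
    HasSum (entropySeriesTerm (x ^ 2))
      ((1 + x) / 2 * log (1 + x) + (1 - x) / 2 * log (1 - x)) := by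
  have hx2 : |x ^ 2| < 1 := by rw [abs_pow]; nlinarith [abs_nonneg x]
  obtain ⟨hx₀, hx₁⟩ := abs_lt.mp hx
  have artanh := (hasSum_log_sub_log_of_abs_lt_one hx).mul_left (x / 2)
  have log_one_sub := (hasSum_pow_div_log_of_abs_lt_one hx2).mul_left (1 / 2)
  have hvalue : (1 + x) / 2 * log (1 + x) + (1 - x) / 2 * log (1 - x)
      = x / 2 * (log (1 + x) - log (1 - x)) - 1 / 2 * -log (1 - x ^ 2) := by
    rw [show (1 : ℝ) - x ^ 2 = (1 + x) * (1 - x) by ring, log_mul (by linarith) (by linarith)]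
    ring
  rw [hvalue]
  refine (artanh.sub log_one_sub).congr_fun fun k => ?_
  have hk : (2 * (k : ℝ) + 1) ≠ 0 := by positivity
  simp only [entropySeriesTerm, show 2 * ((k : ℝ) + 1) - 1 = 2 * k + 1 by ring]
  field_simp
  ring

lemma hasSum_entropySeriesTerm_one_sub_two_mul_sq {ε : ℝ} (h0 : 0 < ε) (h1 : ε < 1) :
    HasSum (entropySeriesTerm ((1 - 2 * ε) ^ 2)) (log 2 - binEntropy ε) := by
  have H := hasSum_entropySeriesTerm_sq (x := 1 - 2 * ε) (abs_lt.mpr ⟨by linarith, by linarith⟩)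
  rw [show 1 + (1 - 2 * ε) = 2 * (1 - ε) by ring, show 1 - (1 - 2 * ε) = 2 * ε by ring,
    log_mul two_ne_zero (by linarith), log_mul two_ne_zero (by linarith)] at H
  convert H using 1
  simp only [binEntropy, log_inv]
  ring

lemma summable_entropySeriesTerm_one : Summable (entropySeriesTerm 1) := by
  have hs : Summable fun k : ℕ => 1 / ((k : ℝ) + 1) ^ 2 := by
    simpa using (summable_nat_add_iff 1).mpr (summable_one_div_nat_pow.mpr one_lt_two)
  refine hs.of_nonneg_of_le (fun k => ?_) (fun k => ?_) <;> simp only [entropySeriesTerm, one_pow]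
  · have : (0 : ℝ) < 2 * ((k : ℝ) + 1) - 1 := by linarith [k.cast_nonneg (α := ℝ)]
    positivity
  · rw [div_le_div_iff₀ (by nlinarith [k.cast_nonneg (α := ℝ)]) (by positivity)]
    nlinarith [k.cast_nonneg (α := ℝ)]

lemma norm_entropySeriesTerm_le {t : ℝ} (h0 : 0 ≤ t) (h1 : t ≤ 1) (k : ℕ) :
    ‖entropySeriesTerm t k‖ ≤ entropySeriesTerm 1 k := by
  have hden : (0 : ℝ) ≤ 2 * ((k : ℝ) + 1) * (2 * ((k : ℝ) + 1) - 1) := by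
    nlinarith [k.cast_nonneg (α := ℝ)]
  simp only [entropySeriesTerm, one_pow, norm_div, norm_pow, Real.norm_eq_abs, abs_of_nonneg h0,
    abs_of_nonneg hden]
  gcongr
  exact pow_le_one₀ h0 h1

lemma continuousOn_tsum_entropySeriesTerm_one_sub_two_mul_sq :
    ContinuousOn (fun ε : ℝ => ∑' k, entropySeriesTerm ((1 - 2 * ε) ^ 2) k) (Icc 0 1) := by
  refine continuousOn_tsum (fun k => ?_) summable_entropySeriesTerm_one fun k ε hε => ?_
  · unfold entropySeriesTerm
    fun_prop
  · exact norm_entropySeriesTerm_le (sq_nonneg _) (by nlinarith [hε.1, hε.2]) k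

lemma tsum_entropySeriesTerm_one_sub_two_mul_sq {ε : ℝ} (h0 : 0 ≤ ε) (h1 : ε ≤ 1) :
    ∑' k, entropySeriesTerm ((1 - 2 * ε) ^ 2) k = log 2 - binEntropy ε := by
  refine EqOn.of_subset_closure (s := Ioo 0 1) (fun ε hε => ?_)
    continuousOn_tsum_entropySeriesTerm_one_sub_two_mul_sq
    (continuous_const.sub binEntropy_continuous).continuousOn Ioo_subset_Icc_self
    (by rw [closure_Ioo zero_ne_one]) ⟨h0, h1⟩
  exact (hasSum_entropySeriesTerm_one_sub_two_mul_sq hε.1 hε.2).tsum_eq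

lemma binEnt_eq_binEntropy_div_log_two (ε : ℝ) : binEnt ε = binEntropy ε / log 2 := by
  simp only [binEnt, binEntropy, logb, log_inv]
  ring

theorem stmt_2 (ε : ℝ) (h0 : 0 ≤ ε) (h1 : ε ≤ 1/2) :
    1 - binEnt ε
      = (1 / Real.log 2) *
          ∑' k : ℕ, ((1 - 2 * ε) ^ 2) ^ (k + 1) / ((2 * ((k : ℝ) + 1)) * (2 * ((k : ℝ) + 1) - 1)) := by
  have hlog2 : log 2 ≠ 0 := (log_pos one_lt_two).ne'
  change _ = _ * ∑' k, entropySeriesTerm ((1 - 2 * ε) ^ 2) k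
  rw [binEnt_eq_binEntropy_div_log_two, tsum_entropySeriesTerm_one_sub_two_mul_sq h0 (by linarith)]
  field_simp
end
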